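/- arXiv:1406.3257 — 2 statements merged into one kernel-verified Lean document; each statement's English description precedes it below -/
import Mathlib

section
/- Let ζ ∈ (0,1) and let ξ = (ξ_i)_{i=1}^N be a vector with ξ_i > 0 for all i, Σ_{i=1}^N ξ_i = 1, and Σ_{j=1}^N (p_{ij} c_{ij}^r)^ζ ξ_j = ξ_i for every i. Then for every finite maximal antichain Γ ⊂ Ω^*, Σ_{σ∈Γ} (p_σ c_σ^r)^ζ ξ_{σ_{|σ|}} = 1, where σ_{|σ|} is the last letter of σ. -/
open Filter MeasureTheory
open scoped ENNReal

namespace QM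

/-- A finite word is admissible w.r.t. `P` if consecutive transition probabilities
are positive. -/
def Adm {N : ℕ} (P : Matrix (Fin N) (Fin N) ℝ) (σ : List (Fin N)) : Prop :=
  List.Chain' (fun a b => 0 < P a b) σ

/-- An infinite word is admissible if all consecutive transition probabilities are positive. -/
def AdmInf {N : ℕ} (P : Matrix (Fin N) (Fin N) ℝ) (τ : ℕ → Fin N) : Prop :=
  ∀ h : ℕ, 0 < P (τ h) (τ (h + 1))

/-- `wprod M σ = M σ₁ σ₂ * ⋯ * M σ_{k-1} σ_k`; equals `1` when `σ` has length at most 1. -/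
noncomputable def wprod {N : ℕ} (M : Matrix (Fin N) (Fin N) ℝ) (σ : List (Fin N)) : ℝ :=
  ((σ.zip σ.tail).map fun x => M x.1 x.2).prod

/-- Spectral radius of a real square matrix: the largest modulus of a complex eigenvalue. -/
noncomputable def specRad {ι : Type} [Fintype ι] [DecidableEq ι] (A : Matrix ι ι ℝ) : ℝ :=
  sSup {x : ℝ | ∃ z : ℂ,
    Module.End.HasEigenvalue (Matrix.toLin' (A.map (fun t => (t : ℂ)))) z ∧ x = ‖z‖}

/-- The matrix `A_{G,s}` with entries `(p_{ij} c_{ij}^r)^{s/(s+r)}` (zero when `p_{ij} = 0`). -/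
noncomputable def AGs {N : ℕ} (P c : Matrix (Fin N) (Fin N) ℝ) (r s : ℝ) :
    Matrix (Fin N) (Fin N) ℝ :=
  Matrix.of fun i j => if 0 < P i j then (P i j * c i j ^ r) ^ (s / (s + r)) else 0

/-- `Ψ_G(s)`, the spectral radius of `A_{G,s}`. -/
noncomputable def PsiG {N : ℕ} (P c : Matrix (Fin N) (Fin N) ℝ) (r s : ℝ) : ℝ :=
  specRad (AGs P c r s)

/-- The submatrix of `A_{G,s}` with rows and columns in `H`. -/
noncomputable def AHs {N : ℕ} (P c : Matrix (Fin N) (Fin N) ℝ) (r s : ℝ)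
    (H : Finset (Fin N)) : Matrix {i // i ∈ H} {i // i ∈ H} ℝ :=
  Matrix.of fun i j => AGs P c r s i.1 j.1

/-- `Ψ_H(s)`, the spectral radius of `A_{H,s}`. -/
noncomputable def PsiH {N : ℕ} (P c : Matrix (Fin N) (Fin N) ℝ) (r s : ℝ)
    (H : Finset (Fin N)) : ℝ :=
  specRad (AHs P c r s H)

/-- Edge relation of the directed graph `G` associated with `P`. -/
def Edge {N : ℕ} (P : Matrix (Fin N) (Fin N) ℝ) (i j : Fin N) : Prop := 0 < P i j

/-- Reachability along directed paths all of whose vertices lie in `S`. -/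
def ReachIn {N : ℕ} (P : Matrix (Fin N) (Fin N) ℝ) (S : Set (Fin N)) (i j : Fin N) : Prop :=
  Relation.ReflTransGen (fun a b => Edge P a b ∧ a ∈ S ∧ b ∈ S) i j

/-- A set of vertices is strongly connected (with the inherited edges). -/
def StrConn {N : ℕ} (P : Matrix (Fin N) (Fin N) ℝ) (S : Set (Fin N)) : Prop :=
  ∀ i ∈ S, ∀ j ∈ S, ReachIn P S i j

/-- `H` is a strongly connected component of `G` containing at least one edge. -/
def IsSCC {N : ℕ} (P : Matrix (Fin N) (Fin N) ℝ) (H : Finset (Fin N)) : Prop :=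
  StrConn P ↑H ∧ (∀ S : Finset (Fin N), H ⊆ S → StrConn P ↑S → S = H) ∧
    ∃ i ∈ H, ∃ j ∈ H, Edge P i j

/-- `H₁ ≺ H₂` : some vertex of `H₂` can be reached from some vertex of `H₁` by a
directed path in `G`. -/
def Prec {N : ℕ} (P : Matrix (Fin N) (Fin N) ℝ) (H₁ H₂ : Finset (Fin N)) : Prop :=
  ∃ i ∈ H₁, ∃ j ∈ H₂, Relation.ReflTransGen (Edge P) i j

/-- Irreducibility of `P` : the graph `G` is strongly connected. -/
def Irred {N : ℕ} (P : Matrix (Fin N) (Fin N) ℝ) : Prop :=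
  ∀ i j : Fin N, Relation.TransGen (Edge P) i j

/-- `Γ` is a finite maximal antichain in `Ω^*`. -/
def IsMaxAntichain {N : ℕ} (P : Matrix (Fin N) (Fin N) ℝ) (Γ : Finset (List (Fin N))) : Prop :=
  (∀ σ ∈ Γ, σ ≠ [] ∧ Adm P σ) ∧
    (∀ σ ∈ Γ, ∀ ω ∈ Γ, σ ≠ ω → ¬ σ <+: ω) ∧
    ∀ τ : ℕ → Fin N, AdmInf P τ → ∃ k : ℕ, 0 < k ∧ (List.range k).map τ ∈ Γ

/-- `Γ` is a finite maximal antichain in `H^*`. -/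
def IsMaxAntichainIn {N : ℕ} (P : Matrix (Fin N) (Fin N) ℝ) (H : Finset (Fin N))
    (Γ : Finset (List (Fin N))) : Prop :=
  (∀ σ ∈ Γ, σ ≠ [] ∧ Adm P σ ∧ ∀ a ∈ σ, a ∈ H) ∧
    (∀ σ ∈ Γ, ∀ ω ∈ Γ, σ ≠ ω → ¬ σ <+: ω) ∧
    ∀ τ : ℕ → Fin N, AdmInf P τ → (∀ h, τ h ∈ H) → ∃ k : ℕ, 0 < k ∧ (List.range k).map τ ∈ Γ

/-- `Γ` is a finite maximal antichain in `H^*(i)`. -/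
def IsMaxAntichainInAt {N : ℕ} (P : Matrix (Fin N) (Fin N) ℝ) (H : Finset (Fin N)) (i : Fin N)
    (Γ : Finset (List (Fin N))) : Prop :=
  (∀ σ ∈ Γ, σ ≠ [] ∧ Adm P σ ∧ (∀ a ∈ σ, a ∈ H) ∧ σ.head? = some i) ∧
    (∀ σ ∈ Γ, ∀ ω ∈ Γ, σ ≠ ω → ¬ σ <+: ω) ∧
    ∀ τ : ℕ → Fin N, AdmInf P τ → (∀ h, τ h ∈ H) → τ 0 = i →
      ∃ k : ℕ, 0 < k ∧ (List.range k).map τ ∈ Γ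

/-- The `n`-th quantization error of order `r` for a measure on `ℝ^q`. -/
noncomputable def quantErr {q : ℕ} (ν : Measure (EuclideanSpace ℝ (Fin q))) (r : ℝ)
    (n : ℕ) : ℝ :=
  sInf {e : ℝ | ∃ α : Finset (EuclideanSpace ℝ (Fin q)), α.Nonempty ∧ α.card ≤ n ∧
    e = (∫ x, Metric.infDist x (↑α : Set (EuclideanSpace ℝ (Fin q))) ^ r ∂ν) ^ (1 / r)}

/-- The `s`-dimensional upper quantization coefficient of order `r`,
`limsup_n n^{r/s} e_{n,r}^r`. -/
noncomputable def upperQCoeff {q : ℕ} (ν : Measure (EuclideanSpace ℝ (Fin q)))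
    (r s : ℝ) : ℝ≥0∞ :=
  Filter.limsup (fun n : ℕ => ENNReal.ofReal ((n : ℝ) ^ (r / s) * quantErr ν r n ^ r))
    Filter.atTop

/-- The `s`-dimensional lower quantization coefficient of order `r`,
`liminf_n n^{r/s} e_{n,r}^r`. -/
noncomputable def lowerQCoeff {q : ℕ} (ν : Measure (EuclideanSpace ℝ (Fin q)))
    (r s : ℝ) : ℝ≥0∞ :=
  Filter.liminf (fun n : ℕ => ENNReal.ofReal ((n : ℝ) ^ (r / s) * quantErr ν r n ^ r))
    Filter.atTop

/-- The upper quantization dimension of order `r`. -/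
noncomputable def upperQDim {q : ℕ} (ν : Measure (EuclideanSpace ℝ (Fin q))) (r : ℝ) : ℝ :=
  Filter.limsup (fun n : ℕ => Real.log n / (- Real.log (quantErr ν r n))) Filter.atTop

/-- The lower quantization dimension of order `r`. -/
noncomputable def lowerQDim {q : ℕ} (ν : Measure (EuclideanSpace ℝ (Fin q))) (r : ℝ) : ℝ :=
  Filter.liminf (fun n : ℕ => Real.log n / (- Real.log (quantErr ν r n))) Filter.atTop

/-- `η = min {p_{ij} c_{ij}^r : p_{ij} > 0}`. -/
noncomputable def eta {N : ℕ} (P c : Matrix (Fin N) (Fin N) ℝ) (r : ℝ) : ℝ :=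
  sInf {x : ℝ | ∃ i j, 0 < P i j ∧ x = P i j * c i j ^ r}

/-- The finite maximal antichain `Λ_{j,r}`. -/
def Lambda {N : ℕ} (P c : Matrix (Fin N) (Fin N) ℝ) (r : ℝ) (j : ℕ) : Set (List (Fin N)) :=
  {σ | σ ≠ [] ∧ Adm P σ ∧
    eta P c r ^ j ≤ wprod P σ.dropLast * wprod c σ.dropLast ^ r ∧
    wprod P σ * wprod c σ ^ r < eta P c r ^ j}

/-- `φ_{j,r}`, the cardinality of `Λ_{j,r}`. -/
noncomputable def phi {N : ℕ} (P c : Matrix (Fin N) (Fin N) ℝ) (r : ℝ) (j : ℕ) : ℕ :=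
  (Lambda P c r j).ncard

end QM

/-!
By the eigenvector equation, the weight `(p_σ c_σ^r)^ζ ξ_{σ_{|σ|}}` of an admissible word is the
total weight of its admissible one-letter extensions. In a finite maximal antichain, all these
children of the parent of a longest word belong to the antichain; replacing them by their parent
gives a maximal antichain of smaller total length with the same total weight. The process ends at
the antichain of one-letter words, whose weight is `∑ ξ_i = 1`.
-/

namespace QM

variable {N : ℕ}

section wprod

variable (M : Matrix (Fin N) (Fin N) ℝ)

@[simp]
lemma wprod_singleton (a : Fin N) : wprod M [a] = 1 := by simp [wprod]

lemma wprod_cons_cons (a b : Fin N) (l : List (Fin N)) :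
    wprod M (a :: b :: l) = M a b * wprod M (b :: l) := by
  simp [wprod]

lemma wprod_append_singleton (ω : List (Fin N)) (i j : Fin N) :
    wprod M (ω ++ [i] ++ [j]) = wprod M (ω ++ [i]) * M i j := by
  induction ω with
  | nil => simp [wprod_cons_cons]
  | cons a ω ih =>
    cases ω with
    | nil => simp [wprod_cons_cons]
    | cons b ω =>
      simp only [List.cons_append] at ih ⊢
      rw [wprod_cons_cons, ih, wprod_cons_cons, mul_assoc]

lemma wprod_nonneg {l : List (Fin N)} (h : List.IsChain (fun a b => 0 ≤ M a b) l) :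
    0 ≤ wprod M l := by
  induction l with
  | nil => simp [wprod]
  | cons a l ih =>
    cases l with
    | nil => simp
    | cons b l =>
      obtain ⟨hab, hl⟩ := List.isChain_cons_cons.1 h
      rw [wprod_cons_cons]
      exact mul_nonneg hab (ih hl)

end wprod

section antichain

variable {P : Matrix (Fin N) (Fin N) ℝ}

/-- The children of the word `ω ++ [i]`, not of `ω`. -/
noncomputable def children (P : Matrix (Fin N) (Fin N) ℝ) (ω : List (Fin N)) (i : Fin N) :
    Finset (List (Fin N)) :=
  (Finset.univ.filter fun j => 0 < P i j).image fun j => ω ++ [i] ++ [j]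

lemma mem_children {ω w : List (Fin N)} {i : Fin N} :
    w ∈ children P ω i ↔ ∃ j, 0 < P i j ∧ ω ++ [i] ++ [j] = w := by
  simp [children]

lemma adm_append_singleton_iff {ω : List (Fin N)} {i j : Fin N} :
    Adm P (ω ++ [i] ++ [j]) ↔ Adm P (ω ++ [i]) ∧ 0 < P i j := by
  change List.IsChain _ (ω ++ [i] ++ [j]) ↔ List.IsChain _ (ω ++ [i]) ∧ _
  rw [List.isChain_append]
  simp

lemma append_singleton_mem_children {ω : List (Fin N)} {i j : Fin N}
    (h : Adm P (ω ++ [i] ++ [j])) : ω ++ [i] ++ [j] ∈ children P ω i :=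
  mem_children.2 ⟨j, (adm_append_singleton_iff.1 h).2, rfl⟩

lemma map_range_eq_take (τ : ℕ → Fin N) {m k : ℕ} (h : m ≤ k) :
    (List.range m).map τ = ((List.range k).map τ).take m := by
  rw [← List.map_take, List.take_range, min_eq_left h]

lemma Adm.exists_admInf_take_eq (hrow : ∀ i, ∃ j, 0 < P i j) {l : List (Fin N)} (hl : l ≠ [])
    (hadm : Adm P l) :
    ∃ τ : ℕ → Fin N, AdmInf P τ ∧ ∀ k ≤ l.length, (List.range k).map τ = l.take k := by
  choose next hnext using hrow
  refine ⟨fun n => if h : n < l.length then l[n] else next^[n + 1 - l.length] (l.getLast hl),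
    fun n => ?_, fun k hk => List.ext_getElem (by simp [hk]) fun n h₁ _ => ?_⟩
  · by_cases h₁ : n + 1 < l.length
    · simpa [h₁, show n < l.length by omega] using List.isChain_iff_getElem.1 hadm n h₁
    by_cases h₂ : n < l.length
    · have hlast : l[n] = l.getLast hl := by
        rw [List.getLast_eq_getElem]; congr; omega
      simpa [h₁, h₂, hlast, show n + 1 + 1 - l.length = 1 by omega] using hnext _
    · simp only [h₁, h₂, dite_false, show n + 1 + 1 - l.length = n + 1 - l.length + 1 by omega,
        Function.iterate_succ_apply']
      exact hnext _
  · have : n < l.length := by simp at h₁; omega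
    simp [this]

variable {Γ : Finset (List (Fin N))}

lemma IsMaxAntichain.exists_mem_comparable (hΓ : IsMaxAntichain P Γ)
    (hrow : ∀ i, ∃ j, 0 < P i j) {l : List (Fin N)} (hl : l ≠ []) (hadm : Adm P l) :
    ∃ σ ∈ Γ, σ <+: l ∨ l <+: σ := by
  obtain ⟨τ, hτ, htake⟩ := hadm.exists_admInf_take_eq hrow hl
  obtain ⟨k, -, hk⟩ := hΓ.2.2 τ hτ
  refine ⟨_, hk, ?_⟩
  rcases le_total k l.length with h | h
  · exact .inl (htake k h ▸ List.take_prefix k l)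
  · refine .inr ?_
    rw [← List.take_length (l := l), ← htake _ le_rfl, map_range_eq_take τ h]
    exact List.take_prefix _ _

lemma IsMaxAntichain.eq_image_singleton (hΓ : IsMaxAntichain P Γ)
    (hrow : ∀ i, ∃ j, 0 < P i j) (hshort : ∀ σ ∈ Γ, σ.length ≤ 1) :
    Γ = Finset.univ.image fun i => [i] := by
  ext w
  simp only [Finset.mem_image, Finset.mem_univ, true_and]
  constructor
  · intro hw
    have : w.length = 1 := le_antisymm (hshort w hw) (List.length_pos_iff.2 (hΓ.1 w hw).1)
    obtain ⟨a, rfl⟩ := List.length_eq_one_iff.1 this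
    exact ⟨a, rfl⟩
  · rintro ⟨i, rfl⟩
    obtain ⟨σ, hσ, hpre | hpre⟩ :=
      hΓ.exists_mem_comparable hrow (List.cons_ne_nil i []) (List.isChain_singleton i)
    · rcases List.prefix_concat_iff (l₂ := []).1 hpre with h | h
      · simpa [h] using hσ
      · exact absurd (List.prefix_nil.1 h) (hΓ.1 σ hσ).1
    · rwa [hpre.eq_of_length (le_antisymm hpre.length_le (hshort σ hσ))]

lemma IsMaxAntichain.children_subset (hΓ : IsMaxAntichain P Γ) (hrow : ∀ i, ∃ j, 0 < P i j)
    {ω : List (Fin N)} {i x : Fin N} (hσ : ω ++ [i] ++ [x] ∈ Γ)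
    (hmax : ∀ σ ∈ Γ, σ.length ≤ ω.length + 2) : children P ω i ⊆ Γ := by
  intro w hw
  obtain ⟨j, hj, rfl⟩ := mem_children.1 hw
  have hadm : Adm P (ω ++ [i] ++ [j]) :=
    adm_append_singleton_iff.2 ⟨(adm_append_singleton_iff.1 (hΓ.1 _ hσ).2).1, hj⟩
  obtain ⟨σ, hσΓ, hpre | hpre⟩ := hΓ.exists_mem_comparable hrow (by simp) hadm
  · rcases List.prefix_concat_iff.1 hpre with rfl | hpre
    · exact hσΓ
    refine absurd (hpre.trans (List.prefix_append _ [x])) (hΓ.2.1 σ hσΓ _ hσ ?_)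
    rintro rfl
    simpa using hpre.length_le
  · have hlen : (ω ++ [i] ++ [j]).length = σ.length :=
      le_antisymm hpre.length_le (by simpa using hmax σ hσΓ)
    rwa [hpre.eq_of_length hlen]

lemma IsMaxAntichain.insert_sdiff_children (hΓ : IsMaxAntichain P Γ)
    {ω : List (Fin N)} {i x : Fin N} (hσ : ω ++ [i] ++ [x] ∈ Γ)
    (hmax : ∀ σ ∈ Γ, σ.length ≤ ω.length + 2) :
    IsMaxAntichain P (insert (ω ++ [i]) (Γ \ children P ω i)) := by
  obtain ⟨hadm, hanti, hcover⟩ := hΓ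
  have hσC := append_singleton_mem_children (hadm _ hσ).2
  refine ⟨?_, ?_, fun τ hτ => ?_⟩
  · simp only [Finset.mem_insert, Finset.mem_sdiff]
    rintro σ (rfl | ⟨hσΓ, -⟩)
    · exact ⟨by simp, (adm_append_singleton_iff.1 (hadm _ hσ).2).1⟩
    · exact hadm σ hσΓ
  · simp only [Finset.mem_insert, Finset.mem_sdiff]
    rintro σ (rfl | ⟨hσΓ, hσC'⟩) τ (rfl | ⟨hτΓ, hτC⟩) hne hpre
    · exact hne rfl
    · -- a proper extension of `ω ++ [i]` of length at most `ω.length + 2` is one of its children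
      obtain ⟨t, rfl⟩ := hpre
      have ht : t.length = 1 := by
        have hle := hmax _ hτΓ
        have hpos := List.length_pos_iff.2 (show t ≠ [] by rintro rfl; simp at hne)
        simp only [List.length_append, List.length_singleton] at hle
        omega
      obtain ⟨y, rfl⟩ := List.length_eq_one_iff.1 ht
      exact hτC (append_singleton_mem_children (hadm _ hτΓ).2)
    · refine hanti σ hσΓ _ hσ ?_ (hpre.trans (List.prefix_append _ [x]))
      rintro rfl
      exact hσC' hσC
    · exact hanti σ hσΓ τ hτΓ hne hpre
  · obtain ⟨k, hk, hkΓ⟩ := hcover τ hτ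
    by_cases hkC : (List.range k).map τ ∈ children P ω i
    · obtain ⟨j, -, hj⟩ := mem_children.1 hkC
      have hklen : k = ω.length + 2 := by simpa using congrArg List.length hj.symm
      refine ⟨ω.length + 1, by omega, Finset.mem_insert.2 (.inl ?_)⟩
      rw [map_range_eq_take τ (by omega : ω.length + 1 ≤ k), ← hj]
      exact List.take_left' (by simp)
    · exact ⟨k, hk, Finset.mem_insert.2 (.inr (Finset.mem_sdiff.2 ⟨hkΓ, hkC⟩))⟩

theorem IsMaxAntichain.sum_eq_sum_singleton (hrow : ∀ i, ∃ j, 0 < P i j)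
    (f : List (Fin N) → ℝ)
    (hf : ∀ ω i, Adm P (ω ++ [i]) → ∑ w ∈ children P ω i, f w = f (ω ++ [i]))
    (hΓ : IsMaxAntichain P Γ) : ∑ σ ∈ Γ, f σ = ∑ i, f [i] := by
  induction hn : ∑ σ ∈ Γ, σ.length using Nat.strong_induction_on generalizing Γ with
  | _ n ih =>
  by_cases hshort : ∀ σ ∈ Γ, σ.length ≤ 1
  · rw [hΓ.eq_image_singleton hrow hshort, Finset.sum_image fun a _ b _ h => List.singleton_inj.1 h]
  -- collapse the children of the parent of a longest word into the parent
  push Not at hshort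
  obtain ⟨σ₀, hσ₀, hmax⟩ := Γ.exists_max_image List.length
    (let ⟨σ, hσ, _⟩ := hshort; ⟨σ, hσ⟩)
  obtain ⟨ω, i, x, rfl⟩ : ∃ ω i x, σ₀ = ω ++ [i] ++ [x] := by
    obtain ⟨σ, hσ, hlen⟩ := hshort
    have h₂ : 2 ≤ σ₀.length := hlen.trans_le (hmax σ hσ)
    obtain ⟨ρ, x, rfl⟩ := (List.eq_nil_or_concat' σ₀).resolve_left (by rintro rfl; simp at h₂)
    obtain ⟨ω, i, rfl⟩ := (List.eq_nil_or_concat' ρ).resolve_left (by rintro rfl; simp at h₂)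
    exact ⟨ω, i, x, rfl⟩
  replace hmax : ∀ σ ∈ Γ, σ.length ≤ ω.length + 2 := fun σ hσ => by simpa using hmax σ hσ
  have hC := hΓ.children_subset hrow hσ₀ hmax
  have hnotin : ω ++ [i] ∉ Γ \ children P ω i := fun h =>
    hΓ.2.1 _ (Finset.mem_sdiff.1 h).1 _ hσ₀ (by simp) (List.prefix_append _ [x])
  have hlength : (ω ++ [i]).length < ∑ σ ∈ children P ω i, σ.length := by
    refine lt_of_lt_of_le ?_ (Finset.single_le_sum (fun σ _ => Nat.zero_le σ.length)
      (append_singleton_mem_children (hΓ.1 _ hσ₀).2))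
    simp
  calc ∑ σ ∈ Γ, f σ = ∑ σ ∈ insert (ω ++ [i]) (Γ \ children P ω i), f σ := by
        rw [Finset.sum_insert hnotin, ← Finset.sum_sdiff hC, hf ω i
          (adm_append_singleton_iff.1 (hΓ.1 _ hσ₀).2).1, add_comm]
    _ = ∑ i, f [i] := by
        refine ih _ ?_ (hΓ.insert_sdiff_children hσ₀ hmax) rfl
        rw [← hn, ← Finset.sum_sdiff hC, Finset.sum_insert hnotin]
        omega

end antichain

section weight

variable (P c : Matrix (Fin N) (Fin N) ℝ) (r ζ : ℝ) (ξ : Fin N → ℝ) (d : Fin N)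

/-- The default letter `d` only matters for the empty word. -/
noncomputable def weight (σ : List (Fin N)) : ℝ :=
  (wprod P σ * wprod c σ ^ r) ^ ζ * ξ (σ.getLastD d)

@[simp]
lemma weight_singleton (i : Fin N) : weight P c r ζ ξ d [i] = ξ i := by
  simp [weight]

variable {P c r ζ ξ}

lemma sum_weight_children (hP : ∀ i j, 0 ≤ P i j) (hc : ∀ i j, 0 < P i j → 0 ≤ c i j)
    (hζ : 0 < ζ) (hξ : ∀ i, ∑ j, (P i j * c i j ^ r) ^ ζ * ξ j = ξ i)
    {ω : List (Fin N)} {i : Fin N} (hadm : Adm P (ω ++ [i])) :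
    ∑ w ∈ children P ω i, weight P c r ζ ξ d w = weight P c r ζ ξ d (ω ++ [i]) := by
  have hwP : 0 ≤ wprod P (ω ++ [i]) := wprod_nonneg P (hadm.imp fun _ _ h => h.le)
  have hwc : 0 ≤ wprod c (ω ++ [i]) := wprod_nonneg c (hadm.imp fun a b h => hc a b h)
  set W := wprod P (ω ++ [i]) * wprod c (ω ++ [i]) ^ r
  have hchild : ∀ j, 0 < P i j → weight P c r ζ ξ d (ω ++ [i] ++ [j])
      = W ^ ζ * ((P i j * c i j ^ r) ^ ζ * ξ j) := fun j hj => by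
    rw [weight, wprod_append_singleton, wprod_append_singleton, List.getLastD_concat,
      Real.mul_rpow hwc (hc i j hj), mul_mul_mul_comm, Real.mul_rpow (by positivity)
        (by have := hc i j hj; positivity), mul_assoc]
  calc ∑ w ∈ children P ω i, weight P c r ζ ξ d w
      = ∑ j ∈ Finset.univ.filter (fun j => 0 < P i j), W ^ ζ * ((P i j * c i j ^ r) ^ ζ * ξ j) := by
        rw [children, Finset.sum_image fun _ _ _ _ h => by simpa using h]
        exact Finset.sum_congr rfl fun j hj => hchild j (Finset.mem_filter.1 hj).2
    _ = W ^ ζ * ∑ j, (P i j * c i j ^ r) ^ ζ * ξ j := by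
        rw [← Finset.mul_sum, Finset.sum_filter_of_ne]
        intro j _ hj
        refine lt_of_le_of_ne (hP i j) fun h => hj ?_
        rw [← h, zero_mul, Real.zero_rpow hζ.ne', zero_mul]
    _ = weight P c r ζ ξ d (ω ++ [i]) := by rw [hξ, weight, List.getLastD_concat]

end weight

end QM

open QM in
theorem antichain_eigenvector_sum
    {N : ℕ} (hN : 2 ≤ N)
    (P c : Matrix (Fin N) (Fin N) ℝ) (r : ℝ)
    (hP0 : ∀ i j, 0 ≤ P i j)
    (hProw : ∀ i, ∑ j, P i j = 1)
    (hc1 : ∀ i j, 0 < P i j → 0 < c i j ∧ c i j < 1)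
    (ζ : ℝ) (hζ0 : 0 < ζ)
    (ξ : Fin N → ℝ) (hξsum : ∑ i, ξ i = 1)
    (hξeig : ∀ i, ∑ j, (P i j * c i j ^ r) ^ ζ * ξ j = ξ i)
    :
    ∀ Γ : Finset (List (Fin N)), QM.IsMaxAntichain P Γ →
      ∑ σ ∈ Γ, (QM.wprod P σ * QM.wprod c σ ^ r) ^ ζ * ξ (σ.getLastD ⟨0, by omega⟩) = 1 := by
  intro Γ hΓ
  have hrow : ∀ i, ∃ j, 0 < P i j := fun i => by
    by_contra! h
    linarith [hProw i, Finset.sum_nonpos fun j (_ : j ∈ Finset.univ) => h j]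
  calc ∑ σ ∈ Γ, weight P c r ζ ξ ⟨0, by omega⟩ σ
      = ∑ i, weight P c r ζ ξ ⟨0, by omega⟩ [i] :=
        hΓ.sum_eq_sum_singleton hrow _ fun ω i hadm =>
          sum_weight_children _ hP0 (fun i j h => (hc1 i j h).1.le) hζ0 hξeig hadm
    _ = 1 := by simpa using hξsum
end

section
/- s_r = max_{H ∈ SC(G)} s_r(H); that is, the unique positive solution of Ψ_G(s_r) = 1 equals the maximum over all strongly connected components H of G (containing at least one edge) of the unique positive solutions s_r(H) of Ψ_H(s_r(H)) = 1. -/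
open Filter MeasureTheory
open scoped ENNReal

/-!
Order the vertices by their sets of ancestors in colex order. Edges never go down in this
order and two vertices get the same rank exactly when they are mutually reachable, so `A_{G,s}`
is block triangular with the strongly connected classes as diagonal blocks, and every eigenvalue
of `A_{G,s}` is an eigenvalue of one of these blocks. A principal submatrix of a nonnegative
matrix has no larger spectral radius (Gelfand's formula with the row-sum norm), hence
`Ψ_H(s_r) ≤ Ψ_G(s_r) = 1` for every `H`, with equality for the class carrying an eigenvalue of
modulus `1`; that class contains an edge, since otherwise its block vanishes.

Raising `s` to `s'` multiplies every entry of `A_{H,s}` by at most `m ^ (s'/(s'+r) - s/(s+r))`,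
where `m < 1` bounds the weights `p_{ij} c_{ij}^r`. So `Ψ_H` drops strictly below `1` once it is
at most `1`, which gives `s_r(H) ≤ s_r` for all `H` and equality for the class above.
-/

open Finset Function Relation

namespace QM

section SpectralRadius

variable {ι κ : Type} [Fintype ι] [DecidableEq ι] [Fintype κ] [DecidableEq κ]

theorem specRad_eq_sSup (A : Matrix ι ι ℝ) :
    specRad A = sSup (norm '' spectrum ℂ (A.map Complex.ofReal)) := by
  simp only [specRad, Module.End.hasEigenvalue_iff_mem_spectrum, Matrix.spectrum_toLin',
    Set.image, eq_comm]

theorem specRad_nonneg (A : Matrix ι ι ℝ) : 0 ≤ specRad A :=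
  Real.sSup_nonneg fun _ ⟨_, _, hx⟩ => hx ▸ norm_nonneg _

theorem norm_le_specRad (A : Matrix ι ι ℝ) {z : ℂ}
    (hz : z ∈ spectrum ℂ (A.map Complex.ofReal)) : ‖z‖ ≤ specRad A := by
  rw [specRad_eq_sSup]
  exact le_csSup ((Matrix.finite_spectrum _).image _).bddAbove ⟨z, hz, rfl⟩

theorem exists_norm_eq_specRad {A : Matrix ι ι ℝ}
    (h : (spectrum ℂ (A.map Complex.ofReal)).Nonempty) :
    ∃ z ∈ spectrum ℂ (A.map Complex.ofReal), ‖z‖ = specRad A := by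
  rw [specRad_eq_sSup]
  exact (h.image _).csSup_mem ((Matrix.finite_spectrum _).image _)

theorem spectralRadius_map_ofReal (A : Matrix ι ι ℝ) :
    spectralRadius ℂ (A.map Complex.ofReal) = ENNReal.ofReal (specRad A) := by
  rcases (spectrum ℂ (A.map Complex.ofReal)).eq_empty_or_nonempty with h | h
  · simp [spectralRadius, specRad_eq_sSup, h]
  refine le_antisymm (iSup₂_le fun z hz => ?_) ?_
  · rw [← ENNReal.ofReal_coe_nnreal, coe_nnnorm]
    exact ENNReal.ofReal_le_ofReal (norm_le_specRad A hz)
  · obtain ⟨z, hz, hnorm⟩ := exists_norm_eq_specRad h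
    rw [← hnorm, ← coe_nnnorm, ENNReal.ofReal_coe_nnreal]
    exact le_iSup₂ (f := fun z (_ : z ∈ spectrum ℂ _) => (‖z‖₊ : ENNReal)) z hz

theorem specRad_submatrix_equiv (A : Matrix ι ι ℝ) (e : κ ≃ ι) :
    specRad (A.submatrix e e) = specRad A := by
  rw [specRad_eq_sSup, specRad_eq_sSup, ← Matrix.submatrix_map]
  exact congrArg (sSup <| norm '' ·) (AlgEquiv.spectrum_eq (Matrix.reindexAlgEquiv ℂ ℂ e.symm) _)

theorem exists_specRad_le_specRad_submatrix_of_blockTriangular {α : Type*} [LinearOrder α]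
    {A : Matrix ι ι ℝ} {b : ι → α} (hA : A.BlockTriangular b) (hpos : 0 < specRad A) :
    ∃ i, ∀ s : Finset ι, (∀ j, j ∈ s ↔ b j = b i) →
      specRad A ≤ specRad (A.submatrix ((↑) : s → ι) (↑)) := by
  have hne : (spectrum ℂ (A.map Complex.ofReal)).Nonempty := by
    by_contra h
    rw [Set.not_nonempty_iff_eq_empty] at h
    simp [specRad_eq_sSup, h] at hpos
  obtain ⟨z, hz, hnorm⟩ := exists_norm_eq_specRad hne
  have hA' : (A.map Complex.ofReal).BlockTriangular b := hA.map Complex.ofRealHom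
  rw [Matrix.mem_spectrum_iff_isRoot_charpoly, hA'.charpoly, Polynomial.IsRoot,
    Polynomial.eval_prod, prod_eq_zero_iff] at hz
  obtain ⟨_, hi, hroot⟩ := hz
  obtain ⟨i, -, rfl⟩ := mem_image.1 hi
  refine ⟨i, fun s hs => ?_⟩
  have hblock := norm_le_specRad _ (Matrix.mem_spectrum_iff_isRoot_charpoly.2 hroot)
  exact hnorm ▸ hblock.trans_eq
    (specRad_submatrix_equiv (A.toSquareBlock b (b i)) (Equiv.subtypeEquivRight hs)).symm

end SpectralRadius

section Comparison

variable {ι κ : Type} [Fintype ι] [DecidableEq ι] [Fintype κ] [DecidableEq κ]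

theorem pow_apply_nonneg {A : Matrix ι ι ℝ} (hA : ∀ i j, 0 ≤ A i j) (n : ℕ) (i j : ι) :
    0 ≤ (A ^ n) i j := by
  induction n generalizing j with
  | zero => by_cases h : i = j <;> simp [h]
  | succ n ih =>
    rw [pow_succ, Matrix.mul_apply]
    exact sum_nonneg fun k _ => mul_nonneg (ih k) (hA k j)

theorem pow_apply_le_of_le_submatrix {A : Matrix κ κ ℝ} {B : Matrix ι ι ℝ} {f : κ → ι}
    (hf : Injective f) {t : ℝ} (ht : 0 ≤ t) (hA : ∀ i j, 0 ≤ A i j) (hB : ∀ i j, 0 ≤ B i j)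
    (hAB : ∀ i j, A i j ≤ t * B (f i) (f j)) (n : ℕ) (i j : κ) :
    (A ^ n) i j ≤ t ^ n * (B ^ n) (f i) (f j) := by
  induction n generalizing j with
  | zero => by_cases h : i = j <;> simp [h, hf.ne]
  | succ n ih =>
    have hBn := pow_apply_nonneg hB n
    rw [pow_succ, Matrix.mul_apply, pow_succ, pow_succ, Matrix.mul_apply, mul_sum]
    calc ∑ k, (A ^ n) i k * A k j
        ≤ ∑ k, t ^ n * (B ^ n) (f i) (f k) * (t * B (f k) (f j)) :=
          sum_le_sum fun k _ =>
            mul_le_mul (ih k) (hAB k j) (hA k j) (mul_nonneg (pow_nonneg ht n) (hBn _ _))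
      _ = ∑ l ∈ univ.map ⟨f, hf⟩, t ^ n * t * ((B ^ n) (f i) l * B l (f j)) := by
          rw [sum_map]; exact sum_congr rfl fun k _ => by simp only [Embedding.coeFn_mk]; ring
      _ ≤ ∑ l, t ^ n * t * ((B ^ n) (f i) l * B l (f j)) :=
          sum_le_sum_of_subset_of_nonneg (subset_univ _) fun l _ _ => by
            have := hBn (f i) l; have := hB l (f j); positivity

theorem map_ofReal_pow (A : Matrix ι ι ℝ) (n : ℕ) :
    A.map Complex.ofReal ^ n = (A ^ n).map Complex.ofReal :=
  (map_pow Complex.ofRealHom.mapMatrix A n).symm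

attribute [local instance] Matrix.linftyOpNormedRing Matrix.linftyOpNormedAlgebra

theorem sum_norm_apply_le_norm (M : Matrix ι ι ℂ) (i : ι) : ∑ j, ‖M i j‖ ≤ ‖M‖ := by
  have := le_sup (f := fun i => ∑ j, ‖M i j‖₊) (mem_univ i)
  rw [← Matrix.linfty_opNNNorm_def] at this
  simpa only [← NNReal.coe_le_coe, NNReal.coe_sum, coe_nnnorm] using this

theorem norm_le_of_sum_norm_apply_le (M : Matrix ι ι ℂ) {C : ℝ} (hC : 0 ≤ C)
    (h : ∀ i, ∑ j, ‖M i j‖ ≤ C) : ‖M‖ ≤ C := by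
  rw [← coe_nnnorm, Matrix.linfty_opNNNorm_def, ← NNReal.coe_mk C hC, NNReal.coe_le_coe]
  exact Finset.sup_le fun i _ => by rw [← NNReal.coe_le_coe]; push_cast; exact h i

theorem norm_map_ofReal_le_of_le_submatrix {A : Matrix κ κ ℝ} {B : Matrix ι ι ℝ} {f : κ → ι}
    (hf : Injective f) {t : ℝ} (ht : 0 ≤ t) (hA : ∀ i j, 0 ≤ A i j)
    (hAB : ∀ i j, A i j ≤ t * B (f i) (f j)) :
    ‖A.map Complex.ofReal‖ ≤ t * ‖B.map Complex.ofReal‖ := by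
  set B' := B.map Complex.ofReal
  refine norm_le_of_sum_norm_apply_le _ (mul_nonneg ht (norm_nonneg _)) fun i => ?_
  calc ∑ j, ‖A.map Complex.ofReal i j‖ = ∑ j, A i j := by
        simp [Complex.norm_real, abs_of_nonneg (hA i _)]
    _ ≤ ∑ j, t * ‖B' (f i) (f j)‖ := sum_le_sum fun j _ =>
        (hAB i j).trans (mul_le_mul_of_nonneg_left (by simp [B', le_abs_self]) ht)
    _ = t * ∑ l ∈ univ.map ⟨f, hf⟩, ‖B' (f i) l‖ := by rw [sum_map, mul_sum]; rfl
    _ ≤ t * ∑ l, ‖B' (f i) l‖ := mul_le_mul_of_nonneg_left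
        (sum_le_sum_of_subset_of_nonneg (subset_univ _) fun _ _ _ => norm_nonneg _) ht
    _ ≤ t * ‖B'‖ := mul_le_mul_of_nonneg_left (sum_norm_apply_le_norm _ (f i)) ht

theorem specRad_le_mul_of_norm_pow_le (A : Matrix κ κ ℝ) (B : Matrix ι ι ℝ) {t : ℝ} (ht : 0 ≤ t)
    (h : ∀ n, ‖A.map Complex.ofReal ^ n‖ ≤ t ^ n * ‖B.map Complex.ofReal ^ n‖) :
    specRad A ≤ t * specRad B := by
  have := FiniteDimensional.complete ℂ (Matrix κ κ ℂ)
  have := FiniteDimensional.complete ℂ (Matrix ι ι ℂ)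
  have hA := spectrum.pow_norm_pow_one_div_tendsto_nhds_spectralRadius (A.map Complex.ofReal)
  have hB := spectrum.pow_norm_pow_one_div_tendsto_nhds_spectralRadius (B.map Complex.ofReal)
  rw [spectralRadius_map_ofReal] at hA hB
  rw [← ENNReal.ofReal_le_ofReal_iff (mul_nonneg ht (specRad_nonneg B)), ENNReal.ofReal_mul ht]
  refine le_of_tendsto_of_tendsto hA (ENNReal.Tendsto.const_mul hB (.inr ENNReal.ofReal_ne_top)) ?_
  filter_upwards [eventually_ne_atTop 0] with n hn
  rw [← ENNReal.ofReal_mul ht]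
  refine ENNReal.ofReal_le_ofReal ?_
  calc ‖A.map Complex.ofReal ^ n‖ ^ (1 / n : ℝ)
      ≤ (t ^ n * ‖B.map Complex.ofReal ^ n‖) ^ (1 / n : ℝ) :=
        Real.rpow_le_rpow (norm_nonneg _) (h n) (by positivity)
    _ = t * ‖B.map Complex.ofReal ^ n‖ ^ (1 / n : ℝ) := by
        rw [Real.mul_rpow (by positivity) (norm_nonneg _), one_div,
          Real.pow_rpow_inv_natCast ht hn]

theorem specRad_le_mul_of_le_submatrix {A : Matrix κ κ ℝ} {B : Matrix ι ι ℝ} {f : κ → ι}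
    (hf : Injective f) {t : ℝ} (ht : 0 ≤ t) (hA : ∀ i j, 0 ≤ A i j) (hB : ∀ i j, 0 ≤ B i j)
    (hAB : ∀ i j, A i j ≤ t * B (f i) (f j)) : specRad A ≤ t * specRad B :=
  specRad_le_mul_of_norm_pow_le A B ht fun n => by
    simpa only [map_ofReal_pow] using norm_map_ofReal_le_of_le_submatrix hf (pow_nonneg ht n)
      (pow_apply_nonneg hA n) (pow_apply_le_of_le_submatrix hf ht hA hB hAB n)

theorem specRad_zero : specRad (0 : Matrix ι ι ℝ) = 0 :=
  (specRad_nonneg 0).antisymm' <| by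
    simpa using specRad_le_mul_of_le_submatrix (A := (0 : Matrix ι ι ℝ)) (B := 0) injective_id
      le_rfl (fun _ _ => le_rfl) (fun _ _ => le_rfl) (by simp)

end Comparison

section Condensation

variable {α : Type*} [Fintype α] (R : α → α → Prop)

open Classical in
noncomputable def ancestors (a : α) : Finset α := univ.filter (ReflTransGen R · a)

variable {R}

theorem mem_ancestors {a x : α} : x ∈ ancestors R a ↔ ReflTransGen R x a := by
  simp [ancestors]

theorem ancestors_mono {a b : α} (h : ReflTransGen R a b) : ancestors R a ⊆ ancestors R b :=
  fun _ hx => (mem_ancestors.1 hx).trans h |> mem_ancestors.2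

theorem ancestors_eq_ancestors_iff {a b : α} :
    ancestors R a = ancestors R b ↔ ReflTransGen R a b ∧ ReflTransGen R b a := by
  refine ⟨fun h => ⟨?_, ?_⟩, fun h => (ancestors_mono h.1).antisymm (ancestors_mono h.2)⟩
  · exact mem_ancestors.1 (h ▸ mem_ancestors.2 .refl)
  · exact mem_ancestors.1 (h.symm ▸ mem_ancestors.2 .refl)

theorem blockTriangular_toColex_ancestors [LinearOrder α] {β : Type*} [Zero β]
    {A : Matrix α α β} (hA : ∀ i j, A i j ≠ 0 → R i j) :
    A.BlockTriangular fun a => toColex (ancestors R a) := by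
  intro i j hlt
  by_contra h
  exact hlt.not_ge (Colex.toColex_le_toColex_of_subset (ancestors_mono (.single (hA i j h))))

end Condensation

section StronglyConnected

variable {N : ℕ} {P : Matrix (Fin N) (Fin N) ℝ}

theorem ReachIn.reflTransGen {S : Set (Fin N)} {u v : Fin N} (h : ReachIn P S u v) :
    ReflTransGen (Edge P) u v :=
  ReflTransGen.mono (fun _ _ h => h.1) _ _ h

theorem reachIn_of_reflTransGen {S : Set (Fin N)} {u v : Fin N}
    (h : ReflTransGen (Edge P) u v)
    (hS : ∀ w, ReflTransGen (Edge P) u w → ReflTransGen (Edge P) w v → w ∈ S) :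
    ReachIn P S u v := by
  induction h with
  | refl => exact .refl
  | tail huw hwv ih =>
    exact .tail (ih fun x hux hxw => hS x hux (hxw.tail hwv))
      ⟨hwv, hS _ huw (.single hwv), hS _ (huw.tail hwv) .refl⟩

variable (P) in
open Classical in
noncomputable def component (i : Fin N) : Finset (Fin N) :=
  univ.filter fun j => ReflTransGen (Edge P) i j ∧ ReflTransGen (Edge P) j i

theorem mem_component {i j : Fin N} :
    j ∈ component P i ↔ ReflTransGen (Edge P) i j ∧ ReflTransGen (Edge P) j i := by
  simp [component]

theorem isSCC_component (i : Fin N)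
    (hedge : ∃ u ∈ component P i, ∃ v ∈ component P i, Edge P u v) :
    IsSCC P (component P i) := by
  refine ⟨fun u hu v hv => ?_, fun S hsub hS => ?_, hedge⟩
  · rw [mem_coe, mem_component] at hu hv
    exact reachIn_of_reflTransGen (hu.2.trans hv.1) fun w huw hwv =>
      mem_component.2 ⟨hu.1.trans huw, hwv.trans hv.2⟩
  · have hi : i ∈ S := hsub (mem_component.2 ⟨.refl, .refl⟩)
    refine Subset.antisymm (fun u hu => ?_) hsub
    exact mem_component.2 ⟨(hS i hi u hu).reflTransGen, (hS u hu i hi).reflTransGen⟩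

end StronglyConnected

section Psi

variable {N : ℕ} {P c : Matrix (Fin N) (Fin N) ℝ} {r : ℝ}

theorem edge_of_AGs_ne_zero {s : ℝ} {i j : Fin N} (h : AGs P c r s i j ≠ 0) : Edge P i j := by
  by_contra hij
  exact h (if_neg hij)

theorem AGs_nonneg (hc : ∀ i j, 0 < P i j → 0 < c i j) (s : ℝ) (i j : Fin N) :
    0 ≤ AGs P c r s i j := by
  simp only [AGs, Matrix.of_apply]
  split_ifs with h
  · have := hc i j h
    positivity
  · exact le_rfl

theorem exists_isSCC_PsiG_le_PsiH {s : ℝ} (hpos : 0 < PsiG P c r s) :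
    ∃ C, IsSCC P C ∧ PsiG P c r s ≤ PsiH P c r s C := by
  obtain ⟨i, hle⟩ := exists_specRad_le_specRad_submatrix_of_blockTriangular
    (blockTriangular_toColex_ancestors fun _ _ => edge_of_AGs_ne_zero) hpos
  have hPsi : PsiG P c r s ≤ PsiH P c r s (component P i) :=
    hle _ fun j => by simp [ancestors_eq_ancestors_iff, mem_component, and_comm]
  refine ⟨component P i, isSCC_component i ?_, hPsi⟩
  by_contra! hno
  have hzero : AHs P c r s (component P i) = 0 := by
    ext u v
    by_contra h
    exact hno u u.2 v v.2 (edge_of_AGs_ne_zero h)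
  rw [PsiH, hzero, specRad_zero] at hPsi
  exact hPsi.not_gt hpos

theorem PsiH_le_PsiG (hc : ∀ i j, 0 < P i j → 0 < c i j) (s : ℝ) (H : Finset (Fin N)) :
    PsiH P c r s H ≤ PsiG P c r s :=
  (specRad_le_mul_of_le_submatrix (A := AHs P c r s H) Subtype.val_injective zero_le_one
    (fun _ _ => AGs_nonneg hc _ _ _) (AGs_nonneg hc s) fun _ _ => (one_mul _).ge).trans_eq
    (one_mul _)

theorem strictMonoOn_div_add (hr : 0 < r) : StrictMonoOn (fun s => s / (s + r)) (Set.Ioi 0) := by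
  intro s hs s' hs' hss'
  simp only [Set.mem_Ioi] at hs hs'
  rw [div_lt_div_iff₀ (by linarith) (by linarith)]
  nlinarith

theorem AGs_le_rpow_mul_AGs (hc : ∀ i j, 0 < P i j → 0 < c i j) {m s s' : ℝ}
    (hm : ∀ i j, 0 < P i j → P i j * c i j ^ r ≤ m) (hθ : s / (s + r) ≤ s' / (s' + r))
    (i j : Fin N) :
    AGs P c r s' i j ≤ m ^ (s' / (s' + r) - s / (s + r)) * AGs P c r s i j := by
  simp only [AGs, Matrix.of_apply]
  split_ifs with h
  · have hw : 0 < P i j * c i j ^ r := mul_pos h (Real.rpow_pos_of_pos (hc i j h) r)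
    calc (P i j * c i j ^ r) ^ (s' / (s' + r))
        = (P i j * c i j ^ r) ^ (s' / (s' + r) - s / (s + r)) *
            (P i j * c i j ^ r) ^ (s / (s + r)) := by
          rw [← Real.rpow_add hw, sub_add_cancel]
      _ ≤ _ := mul_le_mul_of_nonneg_right
          (Real.rpow_le_rpow hw.le (hm i j h) (sub_nonneg.2 hθ)) (by positivity)
  · simp

theorem weight_lt_one (hr : 0 < r) (hP0 : ∀ i j, 0 ≤ P i j) (hProw : ∀ i, ∑ j, P i j = 1)
    (hc1 : ∀ i j, 0 < P i j → 0 < c i j ∧ c i j < 1) {i j : Fin N} (h : 0 < P i j) :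
    P i j * c i j ^ r < 1 :=
  mul_lt_one_of_nonneg_of_lt_one_right
    (hProw i ▸ single_le_sum (fun k _ => hP0 i k) (mem_univ j))
    (Real.rpow_nonneg (hc1 i j h).1.le r) (Real.rpow_lt_one (hc1 i j h).1.le (hc1 i j h).2 hr)

theorem exists_weight_bound_lt_one (hw : ∀ i j, 0 < P i j → P i j * c i j ^ r < 1) :
    ∃ m, 0 ≤ m ∧ m < 1 ∧ ∀ i j, 0 < P i j → P i j * c i j ^ r ≤ m := by
  classical
  set W := insert 0 ((univ.filter fun p : Fin N × Fin N => 0 < P p.1 p.2).image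
    fun p => P p.1 p.2 * c p.1 p.2 ^ r)
  have hW : W.Nonempty := insert_nonempty _ _
  refine ⟨W.max' hW, W.le_max' 0 (mem_insert_self _ _), ?_, fun i j h =>
    W.le_max' _ (mem_insert_of_mem (mem_image.2 ⟨(i, j), by simp [h], rfl⟩))⟩
  obtain h | h := mem_insert.1 (W.max'_mem hW)
  · rw [h]; exact zero_lt_one
  · obtain ⟨p, hp, hpm⟩ := mem_image.1 h
    exact hpm ▸ hw _ _ (mem_filter.1 hp).2

theorem PsiH_lt_one_of_le_one (hr : 0 < r) (hc : ∀ i j, 0 < P i j → 0 < c i j)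
    (hw : ∀ i j, 0 < P i j → P i j * c i j ^ r < 1) {s s' : ℝ} (hs : 0 < s) (hss' : s < s')
    {H : Finset (Fin N)} (h : PsiH P c r s H ≤ 1) : PsiH P c r s' H < 1 := by
  obtain ⟨m, hm0, hm1, hm⟩ := exists_weight_bound_lt_one hw
  have hθ := strictMonoOn_div_add hr hs (hs.trans hss') hss'
  calc PsiH P c r s' H
      ≤ m ^ (s' / (s' + r) - s / (s + r)) * PsiH P c r s H :=
        specRad_le_mul_of_le_submatrix injective_id (Real.rpow_nonneg hm0 _)
          (fun _ _ => AGs_nonneg hc _ _ _) (fun _ _ => AGs_nonneg hc _ _ _)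
          fun _ _ => AGs_le_rpow_mul_AGs hc hm hθ.le _ _
    _ ≤ m ^ (s' / (s' + r) - s / (s + r)) := mul_le_of_le_one_right (Real.rpow_nonneg hm0 _) h
    _ < 1 := Real.rpow_lt_one hm0 hm1 (sub_pos.2 hθ)

theorem le_of_PsiH_le_one_of_PsiH_eq_one (hr : 0 < r) (hc : ∀ i j, 0 < P i j → 0 < c i j)
    (hw : ∀ i j, 0 < P i j → P i j * c i j ^ r < 1) {s s' : ℝ} (hs : 0 < s)
    {H : Finset (Fin N)} (h : PsiH P c r s H ≤ 1) (h' : PsiH P c r s' H = 1) : s' ≤ s :=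
  not_lt.1 fun hlt => (PsiH_lt_one_of_le_one hr hc hw hs hlt h).ne h'

end Psi

end QM

open QM in
theorem sr_eq_max_over_scc_general
    {N : ℕ}
    (P c : Matrix (Fin N) (Fin N) ℝ) (r : ℝ) (hr : 0 < r)
    (hP0 : ∀ i j, 0 ≤ P i j)
    (hProw : ∀ i, ∑ j, P i j = 1)
    (hc1 : ∀ i j, 0 < P i j → 0 < c i j ∧ c i j < 1)
    (sr : ℝ) (hsr : 0 < sr) (hsreq : QM.PsiG P c r sr = 1)
    (sH : Finset (Fin N) → ℝ)
    (hsH : ∀ H : Finset (Fin N), QM.IsSCC P H → 0 < sH H ∧ QM.PsiH P c r (sH H) H = 1)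
    :
    IsGreatest {x : ℝ | ∃ H : Finset (Fin N), QM.IsSCC P H ∧ x = sH H} sr := by
  have hc : ∀ i j, 0 < P i j → 0 < c i j := fun i j h => (hc1 i j h).1
  have hw : ∀ i j, 0 < P i j → P i j * c i j ^ r < 1 :=
    fun _ _ => weight_lt_one hr hP0 hProw hc1
  have hle : ∀ H, PsiH P c r sr H ≤ 1 := fun H => hsreq ▸ PsiH_le_PsiG hc sr H
  have hsH_le : ∀ H, IsSCC P H → sH H ≤ sr := fun H hH =>
    le_of_PsiH_le_one_of_PsiH_eq_one hr hc hw hsr (hle H) (hsH H hH).2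
  obtain ⟨C, hC, hCge⟩ := exists_isSCC_PsiG_le_PsiH (hsreq ▸ zero_lt_one)
  have hC1 : PsiH P c r sr C = 1 := (hle C).antisymm (hsreq ▸ hCge)
  refine ⟨⟨C, hC, (hsH_le C hC).antisymm' ?_⟩, fun _ ⟨H, hH, hx⟩ => hx ▸ hsH_le H hH⟩
  exact le_of_PsiH_le_one_of_PsiH_eq_one hr hc hw (hsH C hC).1 (hsH C hC).2.le hC1

open QM in
theorem sr_eq_max_over_scc
    {N : ℕ} (hN : 2 ≤ N)
    (P c : Matrix (Fin N) (Fin N) ℝ) (r : ℝ) (hr : 0 < r)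
    (hP0 : ∀ i j, 0 ≤ P i j)
    (hProw : ∀ i, ∑ j, P i j = 1)
    (hPcard : ∀ i : Fin N, 2 ≤ {j : Fin N | 0 < P i j}.ncard)
    (hc1 : ∀ i j, 0 < P i j → 0 < c i j ∧ c i j < 1)
    (hc0 : ∀ i j, P i j = 0 → c i j = 0)
    (sr : ℝ) (hsr : 0 < sr) (hsreq : QM.PsiG P c r sr = 1)
    (sH : Finset (Fin N) → ℝ)
    (hsH : ∀ H : Finset (Fin N), QM.IsSCC P H → 0 < sH H ∧ QM.PsiH P c r (sH H) H = 1)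
    :
    IsGreatest {x : ℝ | ∃ H : Finset (Fin N), QM.IsSCC P H ∧ x = sH H} sr :=
  sr_eq_max_over_scc_general P c r hr hP0 hProw hc1 sr hsr hsreq sH hsH
end
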